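/- Let p = ((T,r), λ, X) be a simple well-designed pattern tree and let t be a non-root node of T. Let T_t denote the subtree of T rooted at t, branch(t) the set of nodes on the path from r to the parent of t, and let p' be the pattern tree obtained from p by removing the subtree T_t. Then (var(T_t) ∩ X) \ (var(branch(t)) ∩ X) ≠ ∅ (i.e., t is relevant) if and only if there exists a database D such that p(D) ≠ p'(D). -/

import Mathlib

namespace PTEval

/-- A relational signature: a type of relation symbols, each with an arity. -/
structure Sig where
  Rel : Type
  ar : Rel → ℕ

/-- A relational atom over signature `σ` with variables from `V`. -/
structure Atom (σ : Sig) (V : Type) where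
  R : σ.Rel
  args : Fin (σ.ar R) → V

/-- A σ-structure (database) whose domain is the whole type `A`. -/
structure Db (σ : Sig) (A : Type) where
  rel : ∀ R : σ.Rel, Set (Fin (σ.ar R) → A)

/-- The set of variables occurring in an atom. -/
def Atom.vars {σ : Sig} {V : Type} (τ : Atom σ V) : Set V :=
  Set.range τ.args

/-- The set of variables occurring in a set of atoms. -/
def varsOf {σ : Sig} {V : Type} (𝒜 : Set (Atom σ V)) : Set V :=
  ⋃ τ ∈ 𝒜, τ.vars

/-- The mapping `μ` sends the atom `τ` to a fact of the database `D`. -/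
def satAtom {σ : Sig} {V A : Type} (μ : V → A) (D : Db σ A) (τ : Atom σ V) : Prop :=
  (fun i => μ (τ.args i)) ∈ D.rel τ.R

/-- The mapping `μ`, with domain of definition `dμ`, maps the set of atoms `𝒜`
into the database `D` (written `μ : 𝒜 → D` in the paper). -/
def mapsInto {σ : Sig} {V A : Type} (dμ : Set V) (μ : V → A) (𝒜 : Set (Atom σ V))
    (D : Db σ A) : Prop :=
  varsOf 𝒜 ⊆ dμ ∧ ∀ τ ∈ 𝒜, satAtom μ D τ

/-- A rooted tree on the type of nodes `N`, presented by its parent function: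
the root is a fixed point of `parent` and every node reaches the root by
iterating `parent`. -/
structure RootedTree (N : Type) where
  root : N
  parent : N → N
  parent_root : parent root = root
  reaches_root : ∀ v : N, ∃ n : ℕ, parent^[n] v = root

/-- `a` is an ancestor of `b` in `T` (possibly `a = b`), i.e. `a` lies on the
path from the root to `b`. -/
def RootedTree.anc {N : Type} (T : RootedTree N) (a b : N) : Prop :=
  ∃ n : ℕ, T.parent^[n] b = a

/-- A subtree of `T` containing the root: a set of nodes containing the root
and closed under taking parents. -/
def RootedTree.IsRootedSubtree {N : Type} (T : RootedTree N) (S : Set N) : Prop :=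
  T.root ∈ S ∧ ∀ v ∈ S, T.parent v ∈ S

/-- `t` is a child of the rooted subtree `S`: it is outside `S` but its parent
belongs to `S`. -/
def RootedTree.IsChildOf {N : Type} (T : RootedTree N) (S : Set N) (t : N) : Prop :=
  t ∉ S ∧ T.parent t ∈ S

/-- The set of nodes `S` induces a connected subgraph of the tree `T`:
it is empty, or it has a topmost node `top` which is an ancestor of all its
members and `S` contains every node between `top` and any of its members. -/
def RootedTree.IsConnectedSet {N : Type} (T : RootedTree N) (S : Set N) : Prop :=
  S = ∅ ∨ ∃ top ∈ S, ∀ s ∈ S, T.anc top s ∧ ∀ v : N, T.anc top v → T.anc v s → v ∈ S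

/-- The set of atoms labelling a set of nodes, `λ(T')`. -/
def lamOf {σ : Sig} {V N : Type} (lam : N → Set (Atom σ V)) (S : Set N) : Set (Atom σ V) :=
  ⋃ t ∈ S, lam t

/-- The set of variables appearing in the labels of a set of nodes, `var(T')`. -/
def varsLam {σ : Sig} {V N : Type} (lam : N → Set (Atom σ V)) (S : Set N) : Set V :=
  varsOf (lamOf lam S)

/-- `S` is a subtree of `T` containing the root that witnesses that `μ`
(with domain of definition `dμ`) is a pp-solution of `((T,r),λ)` over `D`:
`var(S) = dom(μ)` and `μ : λ(S) → D`. -/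
def ppWitness {σ : Sig} {V N A : Type} (T : RootedTree N) (lam : N → Set (Atom σ V))
    (D : Db σ A) (dμ : Set V) (μ : V → A) (S : Set N) : Prop :=
  T.IsRootedSubtree S ∧ varsLam lam S = dμ ∧ mapsInto dμ μ (lamOf lam S) D

/-- Relativized pp-witness: `S` is a subtree of `T` containing the root, using
only nodes from the set `U` (the nodes of the — possibly pruned — pattern
tree), with `var(S) = dν` and `ν : λ(S) → D`. -/
def ppWitnessIn {σ : Sig} {V N A : Type} (T : RootedTree N) (lam : N → Set (Atom σ V))
    (U : Set N) (D : Db σ A) (dν : Set V) (ν : V → A) (S : Set N) : Prop :=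
  S ⊆ U ∧ T.IsRootedSubtree S ∧ varsLam lam S = dν ∧ mapsInto dν ν (lamOf lam S) D

/-- `ν` (with domain of definition `dν`) is a solution, over `D`, of the
projection-free pattern tree obtained by restricting `(T,λ)` to the node set
`U`: `ν` is a pp-solution with maximal witnessing subtree `S = T_ν`, and no
child (within `U`) of `T_ν` admits a homomorphism of its label into `D`
agreeing with `ν` on the shared variables. -/
def isSolutionIn {σ : Sig} {V N A : Type} (T : RootedTree N) (lam : N → Set (Atom σ V))
    (U : Set N) (D : Db σ A) (dν : Set V) (ν : V → A) : Prop :=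
  ∃ S : Set N, ppWitnessIn T lam U D dν ν S ∧
    (∀ S' : Set N, ppWitnessIn T lam U D dν ν S' → S' ⊆ S) ∧
    ∀ t ∈ U, t ∉ S → T.parent t ∈ S →
      ¬ ∃ g : V → A, (∀ τ ∈ lam t, satAtom g D τ) ∧
        ∀ v ∈ varsOf (lam t) ∩ dν, g v = ν v

/-- `μ` (a partial mapping with domain of definition `dm ⊆ X`) belongs to the
evaluation, over `D`, of the pattern tree with free variables `X` obtained by
restricting `(T,λ)` to the node set `U`; i.e. `μ` is the restriction to `X` of
some solution of the corresponding projection-free tree. -/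
def inEvalIn {σ : Sig} {V N A : Type} (T : RootedTree N) (lam : N → Set (Atom σ V))
    (X : Set V) (U : Set N) (D : Db σ A) (dm : Set V) (μ : V → A) : Prop :=
  ∃ (dν : Set V) (ν : V → A), isSolutionIn T lam U D dν ν ∧
    dm = dν ∩ X ∧ ∀ v ∈ dm, ν v = μ v

/-
A variable shared between the subtree `T_t` and the rest of a well-designed tree must, by
connectedness, also occur at the parent of `t`. Hence if every free variable of `T_t` already
occurs on the branch above `t`, cutting `T_t` off a solution (or greedily re-growing a solution
of the pruned tree into `T_t`) changes neither the free variables it binds nor their values.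
Conversely, over the database in which every relation is full, the whole tree is a solution,
and it binds a free variable of `T_t` that no solution of the pruned tree can bind.
-/

namespace RootedTree

variable {N : Type} (T : RootedTree N)

def below (t : N) : Set N := {s | T.anc t s}

def branch (t : N) : Set N := {s | T.anc s t ∧ s ≠ t}

theorem anc_refl (a : N) : T.anc a a := ⟨0, rfl⟩

theorem anc_trans {a b c : N} (hab : T.anc a b) (hbc : T.anc b c) : T.anc a c := by
  obtain ⟨n, rfl⟩ := hab
  obtain ⟨m, rfl⟩ := hbc
  exact ⟨n + m, Function.iterate_add_apply _ _ _ _⟩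

theorem anc_parent (a : N) : T.anc (T.parent a) a := ⟨1, rfl⟩

theorem anc_of_anc_parent {a b : N} (h : T.anc a (T.parent b)) : T.anc a b :=
  T.anc_trans h (T.anc_parent b)

theorem anc_parent_of_anc_of_ne {a b : N} (h : T.anc a b) (hne : a ≠ b) :
    T.anc a (T.parent b) := by
  obtain ⟨_ | n, rfl⟩ := h
  · exact absurd rfl hne
  · exact ⟨n, (Function.iterate_succ_apply _ _ _).symm⟩

theorem anc_total_of_anc {a b c : N} (hac : T.anc a c) (hbc : T.anc b c) :
    T.anc a b ∨ T.anc b a := by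
  obtain ⟨m, rfl⟩ := hac
  obtain ⟨n, rfl⟩ := hbc
  rcases le_total m n with hmn | hnm
  · exact Or.inr ⟨n - m, by rw [← Function.iterate_add_apply, Nat.sub_add_cancel hmn]⟩
  · exact Or.inl ⟨m - n, by rw [← Function.iterate_add_apply, Nat.sub_add_cancel hnm]⟩

theorem eq_root_of_iterate_eq_self {v : N} {k : ℕ} (hk : k ≠ 0)
    (h : T.parent^[k] v = v) : v = T.root := by
  obtain ⟨m, hm⟩ := T.reaches_root v
  calc v = T.parent^[k * m] v := (Function.IsPeriodicPt.mul_const h m).symm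
    _ = T.parent^[k * m - m] (T.parent^[m] v) := by
        rw [← Function.iterate_add_apply, Nat.sub_add_cancel (Nat.le_mul_of_pos_left m
          (Nat.pos_of_ne_zero hk))]
    _ = T.root := by rw [hm, Function.iterate_fixed T.parent_root]

theorem anc_antisymm {a b : N} (hab : T.anc a b) (hba : T.anc b a) : a = b := by
  obtain ⟨_ | n, rfl⟩ := hab
  · rfl
  obtain ⟨m, hm⟩ := hba
  have hb : b = T.root := T.eq_root_of_iterate_eq_self (k := m + (n + 1)) (by omega) <| by
    rw [Function.iterate_add_apply, hm]
  subst hb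
  exact Function.iterate_fixed T.parent_root _

theorem parent_ne_self {t : N} (ht : t ≠ T.root) : T.parent t ≠ t :=
  fun h => ht (T.eq_root_of_iterate_eq_self one_ne_zero h)

theorem not_anc_parent {t : N} (ht : t ≠ T.root) : ¬ T.anc t (T.parent t) :=
  fun h => T.parent_ne_self ht (T.anc_antisymm (T.anc_parent t) h)

theorem parent_mem_branch {t : N} (ht : t ≠ T.root) : T.parent t ∈ T.branch t :=
  ⟨T.anc_parent t, T.parent_ne_self ht⟩

theorem branch_subset_compl_below (t : N) : T.branch t ⊆ (T.below t)ᶜ :=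
  fun _ ⟨hst, hne⟩ hts => hne (T.anc_antisymm hst hts)

theorem induction {P : N → Prop} (root : P T.root) (step : ∀ v, P (T.parent v) → P v)
    (v : N) : P v := by
  obtain ⟨n, hn⟩ := T.reaches_root v
  induction n generalizing v with
  | zero => rw [← show T.parent^[0] v = T.root from hn] at root; exact root
  | succ n ih => exact step v (ih _ hn)

variable {T}

theorem IsRootedSubtree.mem_of_anc {S : Set N} (hS : T.IsRootedSubtree S) {a b : N}
    (hab : T.anc a b) (hb : b ∈ S) : a ∈ S := by
  obtain ⟨n, rfl⟩ := hab
  induction n with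
  | zero => exact hb
  | succ n ih => rw [Function.iterate_succ_apply']; exact hS.2 _ ih

theorem IsRootedSubtree.insert {S : Set N} (hS : T.IsRootedSubtree S) {u : N}
    (hu : T.parent u ∈ S) : T.IsRootedSubtree (insert u S) :=
  ⟨Set.mem_insert_of_mem _ hS.1, by
    rintro v (rfl | hv)
    · exact Set.mem_insert_of_mem _ hu
    · exact Set.mem_insert_of_mem _ (hS.2 v hv)⟩

theorem IsRootedSubtree.inter_compl_below {S : Set N} (hS : T.IsRootedSubtree S) {t : N}
    (ht : t ≠ T.root) : T.IsRootedSubtree (S ∩ (T.below t)ᶜ) :=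
  ⟨⟨hS.1, fun h => ht (T.anc_antisymm h (T.reaches_root t))⟩,
    fun v hv => ⟨hS.2 v hv.1, fun h => hv.2 (T.anc_of_anc_parent h)⟩⟩

theorem IsConnectedSet.parent_mem {C : Set N} (hC : T.IsConnectedSet C) {t s₁ s₂ : N}
    (hs₁ : s₁ ∈ C) (h₁ : T.anc t s₁) (hs₂ : s₂ ∈ C) (h₂ : ¬ T.anc t s₂) :
    T.parent t ∈ C := by
  rcases hC with rfl | ⟨top, -, hC⟩
  · exact hs₁.elim
  obtain ⟨htop₁, hbetween⟩ := hC s₁ hs₁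
  have hnot : ¬ T.anc t top := fun h => h₂ (T.anc_trans h (hC s₂ hs₂).1)
  have htop : T.anc top t := (T.anc_total_of_anc h₁ htop₁).resolve_left hnot
  refine hbetween _ (T.anc_parent_of_anc_of_ne htop ?_) (T.anc_trans (T.anc_parent t) h₁)
  rintro rfl
  exact hnot (T.anc_refl _)

end RootedTree

section Labels

variable {σ : Sig} {N V A : Type} {lam : N → Set (Atom σ V)}

def IsWellDesigned (T : RootedTree N) (lam : N → Set (Atom σ V)) : Prop :=
  ∀ v : V, T.IsConnectedSet {s : N | v ∈ varsOf (lam s)}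

theorem mem_lamOf {S : Set N} {τ : Atom σ V} :
    τ ∈ lamOf lam S ↔ ∃ s ∈ S, τ ∈ lam s := by
  simp [lamOf]

theorem mem_varsLam {S : Set N} {y : V} :
    y ∈ varsLam lam S ↔ ∃ s ∈ S, y ∈ varsOf (lam s) := by
  simp [varsLam, varsOf, lamOf]

theorem lamOf_mono {S₁ S₂ : Set N} (h : S₁ ⊆ S₂) : lamOf lam S₁ ⊆ lamOf lam S₂ :=
  Set.biUnion_subset_biUnion_left h

theorem varsLam_mono {S₁ S₂ : Set N} (h : S₁ ⊆ S₂) :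
    varsLam lam S₁ ⊆ varsLam lam S₂ :=
  Set.biUnion_subset_biUnion_left (lamOf_mono h)

theorem varsOf_subset_varsLam {S : Set N} {s : N} (hs : s ∈ S) :
    varsOf (lam s) ⊆ varsLam lam S :=
  fun _ hy => mem_varsLam.2 ⟨s, hs, hy⟩

theorem satAtom_congr {μ μ' : V → A} {D : Db σ A} {τ : Atom σ V}
    (h : ∀ v ∈ τ.vars, μ v = μ' v) : satAtom μ D τ ↔ satAtom μ' D τ := by
  have : (fun i => μ (τ.args i)) = fun i => μ' (τ.args i) :=
    funext fun i => h _ (Set.mem_range_self i)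
  simp only [satAtom, this]

variable {T : RootedTree N} {t : N}

theorem varsLam_below_inter_compl_below_subset (hwd : IsWellDesigned T lam) :
    varsLam lam (T.below t) ∩ varsLam lam (T.below t)ᶜ ⊆ varsOf (lam (T.parent t)) := by
  rintro y ⟨hy₁, hy₂⟩
  obtain ⟨s₁, h₁, hs₁⟩ := mem_varsLam.1 hy₁
  obtain ⟨s₂, h₂, hs₂⟩ := mem_varsLam.1 hy₂
  exact RootedTree.IsConnectedSet.parent_mem (C := {s | y ∈ varsOf (lam s)}) (hwd y)
    hs₁ h₁ hs₂ h₂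

theorem varsLam_inter_compl_below (hwd : IsWellDesigned T lam) (ht : t ≠ T.root) {S : Set N}
    (hS : T.IsRootedSubtree S) :
    varsLam lam S ∩ varsLam lam (T.below t)ᶜ ⊆ varsLam lam (S ∩ (T.below t)ᶜ) := by
  rintro y ⟨hyS, hyU⟩
  obtain ⟨s, hs, hy⟩ := mem_varsLam.1 hyS
  by_cases hts : s ∈ T.below t
  · have hpt : T.parent t ∈ S ∩ (T.below t)ᶜ :=
      ⟨hS.mem_of_anc (T.anc_trans (T.anc_parent t) hts) hs, T.not_anc_parent ht⟩
    exact varsOf_subset_varsLam hpt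
      (varsLam_below_inter_compl_below_subset hwd ⟨varsOf_subset_varsLam hts hy, hyU⟩)
  · exact varsOf_subset_varsLam (S := S ∩ (T.below t)ᶜ) ⟨hs, hts⟩ hy

theorem notMem_varsLam_compl_below (hwd : IsWellDesigned T lam) (ht : t ≠ T.root) {x : V}
    (hx : x ∈ varsLam lam (T.below t)) (hxB : x ∉ varsLam lam (T.branch t)) :
    x ∉ varsLam lam (T.below t)ᶜ := fun hxU =>
  hxB <| varsOf_subset_varsLam (T.parent_mem_branch ht)
    (varsLam_below_inter_compl_below_subset hwd ⟨hx, hxU⟩)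

end Labels

section Solutions

variable {σ : Sig} {N V A : Type} {T : RootedTree N} {lam : N → Set (Atom σ V)} {U : Set N}
  {D : Db σ A} {d : Set V} {ν : V → A}

def NoExtendableChild (T : RootedTree N) (lam : N → Set (Atom σ V)) (U : Set N) (D : Db σ A)
    (d : Set V) (ν : V → A) (S : Set N) : Prop :=
  ∀ u ∈ U, u ∉ S → T.parent u ∈ S →
    ¬ ∃ g : V → A, (∀ τ ∈ lam u, satAtom g D τ) ∧
      ∀ v ∈ varsOf (lam u) ∩ d, g v = ν v

theorem NoExtendableChild.subset {S S₁ : Set N} (hS : NoExtendableChild T lam U D d ν S)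
    (hroot : T.root ∈ S) (hS₁ : T.IsRootedSubtree S₁) (hS₁U : S₁ ⊆ U) {g : V → A}
    (hg : ∀ τ ∈ lamOf lam S₁, satAtom g D τ) (hgν : ∀ v ∈ d, g v = ν v) :
    S₁ ⊆ S := by
  intro v
  induction v using T.induction with
  | root => exact fun _ => hroot
  | step v ih =>
    intro hv
    by_contra hvS
    exact hS v (hS₁U hv) hvS (ih (hS₁.2 v hv))
      ⟨g, fun τ hτ => hg τ (mem_lamOf.2 ⟨v, hv, hτ⟩), fun w hw => hgν w hw.2⟩

theorem isSolutionIn_of_noExtendableChild {S : Set N} (hS : ppWitnessIn T lam U D d ν S)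
    (hchild : NoExtendableChild T lam U D d ν S) : isSolutionIn T lam U D d ν :=
  ⟨S, hS, fun _ hS₁ => hchild.subset hS.2.1.1 hS₁.2.1 hS₁.1 hS₁.2.2.2.2 fun _ _ => rfl,
    hchild⟩

theorem exists_maximal_extension [Finite N] {S' : Set N} {ν' : V → A}
    (hS' : T.IsRootedSubtree S') (hmap' : ∀ τ ∈ lamOf lam S', satAtom ν' D τ) :
    ∃ S ν, S' ⊆ S ∧ ppWitnessIn T lam Set.univ D (varsLam lam S) ν S ∧
      (∀ v ∈ varsLam lam S', ν v = ν' v) ∧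
      NoExtendableChild T lam Set.univ D (varsLam lam S) ν S := by
  classical
  let P : Set N → Prop := fun S => S' ⊆ S ∧ ∃ ν : V → A, T.IsRootedSubtree S ∧
    (∀ τ ∈ lamOf lam S, satAtom ν D τ) ∧ ∀ v ∈ varsLam lam S', ν v = ν' v
  obtain ⟨S, -, hmax⟩ :=
    Finite.exists_le_maximal (p := P) ⟨subset_rfl, ν', hS', hmap', fun _ _ => rfl⟩
  obtain ⟨hS'S, ν, hS, hmap, hagree⟩ := hmax.prop
  refine ⟨S, ν, hS'S, ⟨Set.subset_univ _, hS, rfl, subset_rfl, hmap⟩, hagree, ?_⟩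
  rintro u - huS hpu ⟨g, hg, hgν⟩
  let ν₂ := (varsLam lam S).piecewise ν g
  have hν₂S : ∀ v ∈ varsLam lam S, ν₂ v = ν v :=
    fun v hv => Set.piecewise_eq_of_mem _ _ _ hv
  have hν₂u : ∀ v ∈ varsOf (lam u), ν₂ v = g v := fun v hv => by
    by_cases hvS : v ∈ varsLam lam S
    · rw [hν₂S v hvS, hgν v ⟨hv, hvS⟩]
    · exact Set.piecewise_eq_of_notMem _ _ _ hvS
  have hinsert : P (insert u S) := by
    refine ⟨hS'S.trans (Set.subset_insert _ _), ν₂, hS.insert hpu, ?_,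
      fun v hv => (hν₂S v (varsLam_mono hS'S hv)).trans (hagree v hv)⟩
    intro τ hτ
    obtain ⟨s, rfl | hs, hτs⟩ := mem_lamOf.1 hτ
    · exact (satAtom_congr fun v hv =>
        hν₂u v (Set.mem_biUnion hτs hv)).2 (hg τ hτs)
    · exact (satAtom_congr fun v hv =>
        hν₂S v (mem_varsLam.2 ⟨s, hs, Set.mem_biUnion hτs hv⟩)).2
        (hmap τ (mem_lamOf.2 ⟨s, hs, hτs⟩))
  exact huS ((hmax.eq_of_subset hinsert (Set.subset_insert u S)) ▸ Set.mem_insert u S)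

end Solutions

section Pruning

variable {σ : Sig} {N V A : Type} {T : RootedTree N} {lam : N → Set (Atom σ V)} {X : Set V}
  {t : N} {D : Db σ A} {dm : Set V} {μ : V → A}

theorem varsLam_inter_eq_of_irrelevant (hwd : IsWellDesigned T lam) (ht : t ≠ T.root)
    (hirr : varsLam lam (T.below t) ∩ X ⊆ varsLam lam (T.branch t) ∩ X) {S : Set N}
    (hS : T.IsRootedSubtree S) :
    varsLam lam S ∩ X = varsLam lam (S ∩ (T.below t)ᶜ) ∩ X := by
  refine subset_antisymm (fun y ⟨hyS, hyX⟩ => ⟨?_, hyX⟩)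
    (Set.inter_subset_inter_left X (varsLam_mono Set.inter_subset_left))
  refine varsLam_inter_compl_below hwd ht hS ⟨hyS, ?_⟩
  obtain ⟨s, -, hy⟩ := mem_varsLam.1 hyS
  by_cases hts : s ∈ T.below t
  · exact varsLam_mono (T.branch_subset_compl_below t)
      (hirr ⟨varsOf_subset_varsLam hts hy, hyX⟩).1
  · exact varsOf_subset_varsLam hts hy

theorem inEvalIn_compl_below_of_inEvalIn_univ (hwd : IsWellDesigned T lam) (ht : t ≠ T.root)
    (hirr : varsLam lam (T.below t) ∩ X ⊆ varsLam lam (T.branch t) ∩ X)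
    (h : inEvalIn T lam X Set.univ D dm μ) : inEvalIn T lam X (T.below t)ᶜ D dm μ := by
  obtain ⟨-, ν, ⟨S, ⟨-, hS, rfl, -, hmap⟩, -, hchild⟩, rfl, hval⟩ := h
  refine ⟨_, ν, isSolutionIn_of_noExtendableChild (S := S ∩ (T.below t)ᶜ)
    ⟨Set.inter_subset_right, hS.inter_compl_below ht, rfl, subset_rfl,
      fun τ hτ => hmap τ (lamOf_mono Set.inter_subset_left hτ)⟩ ?_,
    varsLam_inter_eq_of_irrelevant hwd ht hirr hS, hval⟩
  rintro u hu huS hpu ⟨g, hg, hgν⟩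
  exact hchild u trivial (fun h => huS ⟨h, hu⟩) hpu.1 ⟨g, hg, fun v ⟨hv, hvS⟩ =>
    hgν v ⟨hv, varsLam_inter_compl_below hwd ht hS ⟨hvS, varsOf_subset_varsLam hu hv⟩⟩⟩

theorem inEvalIn_univ_of_inEvalIn_compl_below [Finite N] (hwd : IsWellDesigned T lam)
    (ht : t ≠ T.root) (hirr : varsLam lam (T.below t) ∩ X ⊆ varsLam lam (T.branch t) ∩ X)
    (h : inEvalIn T lam X (T.below t)ᶜ D dm μ) : inEvalIn T lam X Set.univ D dm μ := by
  obtain ⟨-, ν', ⟨S', ⟨hS'U, hS', rfl, -, hmap'⟩, -, hchild'⟩, rfl, hval⟩ := h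
  obtain ⟨S, ν, hS'S, hwit, hagree, hchild⟩ := exists_maximal_extension hS' hmap'
  have hS : T.IsRootedSubtree S := hwit.2.1
  have hS'eq : S' = S ∩ (T.below t)ᶜ := subset_antisymm (Set.subset_inter hS'S hS'U)
    (NoExtendableChild.subset hchild' hS'.1 (hS.inter_compl_below ht) Set.inter_subset_right
      (fun τ hτ => hwit.2.2.2.2 τ (lamOf_mono Set.inter_subset_left hτ)) hagree)
  refine ⟨_, ν, isSolutionIn_of_noExtendableChild hwit hchild, ?_,
    fun v hv => (hagree v hv.1).trans (hval v hv)⟩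
  rw [hS'eq, varsLam_inter_eq_of_irrelevant hwd ht hirr hS]

theorem inEvalIn.subset_varsLam {U : Set N} (h : inEvalIn T lam X U D dm μ) :
    dm ⊆ varsLam lam U := by
  obtain ⟨-, -, ⟨S, ⟨hSU, -, rfl, -⟩, -⟩, rfl, -⟩ := h
  exact fun y hy => varsLam_mono hSU hy.1

def Db.full (σ : Sig) : Db σ Unit := ⟨fun _ => Set.univ⟩

theorem inEvalIn_univ_full :
    inEvalIn T lam X Set.univ (Db.full σ) (varsLam lam Set.univ ∩ X) (fun _ => ()) :=
  ⟨_, _, isSolutionIn_of_noExtendableChild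
    ⟨subset_rfl, ⟨trivial, fun _ _ => trivial⟩, rfl, subset_rfl, fun _ _ => trivial⟩
    (fun _ _ hu => absurd trivial hu), rfl, fun _ _ => rfl⟩

end Pruning

theorem stmt11_general {σ : Sig} {N V : Type} [Finite N]
    (T : RootedTree N) (lam : N → Set (Atom σ V)) (X : Set V)
    -- well-designedness
    (hwd : ∀ v : V, T.IsConnectedSet {s : N | v ∈ varsOf (lam s)})
    (t : N) (ht : t ≠ T.root) :
    ((varsLam lam {s : N | T.anc t s} ∩ X) \
        (varsLam lam {s : N | T.anc s t ∧ s ≠ t} ∩ X)).Nonempty ↔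
      ∃ (A : Type) (_ : Finite A) (D : Db σ A) (dm : Set V) (μ : V → A),
        ¬ (inEvalIn T lam X Set.univ D dm μ ↔
            inEvalIn T lam X {s : N | ¬ T.anc t s} D dm μ) := by
  constructor
  · rintro ⟨x, ⟨hxT, hxX⟩, hxB⟩
    refine ⟨Unit, inferInstance, Db.full σ, varsLam lam Set.univ ∩ X, fun _ => (),
      fun hiff => ?_⟩
    have hx : x ∈ varsLam lam Set.univ ∩ X := ⟨varsLam_mono (Set.subset_univ _) hxT, hxX⟩
    exact notMem_varsLam_compl_below hwd ht hxT (fun h => hxB ⟨h, hxX⟩)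
      ((hiff.1 inEvalIn_univ_full).subset_varsLam hx)
  · rintro ⟨A, -, D, dm, μ, hne⟩
    by_contra hrel
    have hirr := Set.sdiff_eq_empty.1 (Set.not_nonempty_iff_eq_empty.1 hrel)
    exact hne ⟨inEvalIn_compl_below_of_inEvalIn_univ hwd ht hirr,
      inEvalIn_univ_of_inEvalIn_compl_below hwd ht hirr⟩

/-- Let `p = ((T,r),λ,X)` be a simple well-designed pattern
tree and `t` a non-root node. Let `p'` be obtained from `p` by removing the
subtree rooted at `t` (restricting to the nodes that are not descendants of
`t`). Then `t` is relevant, i.e.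
`(var(T_t) ∩ X) \ (var(branch(t)) ∩ X) ≠ ∅` where `T_t` is the subtree rooted
at `t` and `branch(t)` the set of proper ancestors of `t`, iff there exists a
database `D` with `p(D) ≠ p'(D)`. -/
theorem stmt11 {σ : Sig} {N V : Type} [Finite N]
    (T : RootedTree N) (lam : N → Set (Atom σ V)) (hlamfin : ∀ s : N, (lam s).Finite)
    (X : Set V) (hX : X ⊆ varsLam lam Set.univ)
    -- well-designedness
    (hwd : ∀ v : V, T.IsConnectedSet {s : N | v ∈ varsOf (lam s)})
    -- simplicity: distinct atoms in the (disjointly) labelled tree never share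
    -- a relation symbol, and no atom occurs at two distinct nodes
    (hsimple : ∀ t₁ t₂ : N, ∀ τ₁ ∈ lam t₁, ∀ τ₂ ∈ lam t₂,
      τ₁.R = τ₂.R → τ₁ = τ₂ ∧ t₁ = t₂)
    (t : N) (ht : t ≠ T.root) :
    ((varsLam lam {s : N | T.anc t s} ∩ X) \
        (varsLam lam {s : N | T.anc s t ∧ s ≠ t} ∩ X)).Nonempty ↔
      ∃ (A : Type) (_ : Finite A) (D : Db σ A) (dm : Set V) (μ : V → A),
        ¬ (inEvalIn T lam X Set.univ D dm μ ↔
            inEvalIn T lam X {s : N | ¬ T.anc t s} D dm μ) :=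
  stmt11_general T lam X hwd t ht

end PTEval
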